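/- arXiv:1704.02051 — 4 statements merged into one kernel-verified Lean document; each statement's English description precedes it below -/
import Mathlib

section
/- Let R = (S,T,s,t,r) be a reaction network with rates, with mass-action vector field v^R(c) = Σ_{τ ∈ T} r(τ)·(t(τ) − s(τ))·c^{s(τ)} on ℝ^S, where complexes t(τ), s(τ) ∈ ℕ^S are viewed in ℝ^S. Let f : S → S' be a function between finite sets and let R' = (S', T, f_*(s), f_*(t), r) be the pushed-forward reaction network with rates. Then v^{R'} = f_* ∘ v^R ∘ f^*, where f_* and f^* are the linear pushforward and pullback maps between ℝ^S and ℝ^{S'}. -/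
/-- Pushforward of real-valued functions along a map of finite sets (fiberwise sum). -/
def pushR {S S' : Type*} [Fintype S] [DecidableEq S'] (f : S → S') (c : S → ℝ) : S' → ℝ :=
  fun σ' => ∑ σ : S, if f σ = σ' then c σ else 0

/-- Pullback of real-valued functions. -/
def pullR {S S' : Type*} (f : S → S') (c : S' → ℝ) : S → ℝ := c ∘ f

/-- Pushforward of an `ℕ`-valued complex along a map of finite sets. -/
def pushN {S S' : Type*} [Fintype S] [DecidableEq S'] (f : S → S') (κ : S → ℕ) : S' → ℕ :=
  fun σ' => ∑ σ : S, if f σ = σ' then κ σ else 0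

/-- The mass-action vector field `v^R(c) = ∑_τ r(τ)·(t(τ) − s(τ))·c^{s(τ)}`. -/
def massAction {S T : Type*} [Fintype S] [Fintype T] (s t : T → S → ℕ) (r : T → ℝ) :
    (S → ℝ) → (S → ℝ) :=
  fun c σ => ∑ τ : T, r τ * ((t τ σ : ℝ) - (s τ σ : ℝ)) * ∏ σ'' : S, c σ'' ^ s τ σ''

/-
Both sides are sums over the same reactions. For a single reaction the monomial of the
pushed-forward complex at `c` equals the monomial of the original complex at `f^* c`, since
`c^{f_* κ} = ∏_{σ'} c_{σ'}^{∑_{f σ = σ'} κ σ} = ∏_σ c_{f σ}^{κ σ}`; and the reaction vector of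
the pushed-forward reaction is the pushforward of the original one, because `f_*` commutes with
the cast `ℕ^S → ℝ^S`. Linearity of `f_*` then assembles the sum.
-/

section Pushforward

variable {S S' : Type*} [Fintype S] [DecidableEq S'] (f : S → S')

theorem pushR_sum {ι : Type*} (u : Finset ι) (g : ι → S → ℝ) :
    pushR f (∑ i ∈ u, g i) = ∑ i ∈ u, pushR f (g i) := by
  funext σ'
  simp only [pushR, Finset.sum_apply, ← Finset.sum_filter]
  exact Finset.sum_comm

theorem pushR_smul (a : ℝ) (c : S → ℝ) : pushR f (a • c) = a • pushR f c := by
  funext σ'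
  simp only [pushR, Pi.smul_apply, smul_eq_mul, Finset.mul_sum, mul_ite, mul_zero]

theorem pushR_natCast_sub (κ κ' : S → ℕ) :
    pushR f (fun σ => (κ σ : ℝ) - κ' σ) = fun σ' => (pushN f κ σ' : ℝ) - pushN f κ' σ' := by
  funext σ'
  simp only [pushR, pushN, Nat.cast_sum, Nat.cast_ite, Nat.cast_zero, ← Finset.sum_sub_distrib,
    ite_sub_ite, sub_zero]

theorem prod_pow_pushN [Fintype S'] (κ : S → ℕ) (c : S' → ℝ) :
    ∏ σ' : S', c σ' ^ pushN f κ σ' = ∏ σ : S, pullR f c σ ^ κ σ := by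
  simp only [pushN, ← Finset.prod_pow_eq_pow_sum, pow_ite, pow_zero]
  rw [Finset.prod_comm]
  exact Finset.prod_congr rfl fun σ _ => by simp [pullR]

end Pushforward

theorem massAction_eq_sum_smul {S T : Type*} [Fintype S] [Fintype T] (s t : T → S → ℕ)
    (r : T → ℝ) (c : S → ℝ) :
    massAction s t r c
      = ∑ τ, (r τ * ∏ σ, c σ ^ s τ σ) • fun σ => (t τ σ : ℝ) - s τ σ := by
  funext σ
  simp only [massAction, Finset.sum_apply, Pi.smul_apply, smul_eq_mul]
  exact Finset.sum_congr rfl fun τ _ => by ring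

theorem massAction_pushforward_general {S S' T : Type*} [Fintype S] [Fintype S'] [Fintype T]
    [DecidableEq S'] (s t : T → S → ℕ) (r : T → ℝ) (f : S → S') :
    massAction (fun τ => pushN f (s τ)) (fun τ => pushN f (t τ)) r
      = fun c => pushR f (massAction s t r (pullR f c)) := by
  funext c
  rw [massAction_eq_sum_smul, massAction_eq_sum_smul, pushR_sum]
  refine Finset.sum_congr rfl fun τ _ => ?_
  rw [pushR_smul, pushR_natCast_sub, prod_pow_pushN]

/-- For a reaction network with rates `R = (S,T,s,t,r)` and `f : S → S'`, the mass-action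
vector field of the pushed-forward network `R' = (S', T, f_*(s), f_*(t), r)` is
`v^{R'} = f_* ∘ v^R ∘ f^*`. -/
theorem massAction_pushforward {S S' T : Type*} [Fintype S] [Fintype S'] [Fintype T]
    [DecidableEq S'] (s t : T → S → ℕ) (r : T → ℝ) (hr : ∀ τ, 0 < r τ) (f : S → S') :
    massAction (fun τ => pushN f (s τ)) (fun τ => pushN f (t τ)) r
      = fun c => pushR f (massAction s t r (pullR f c)) :=
  massAction_pushforward_general s t r f
end

section
/- The mass-action vector field of a disjoint union of two reaction networks with rates decomposes: if R is a reaction network with rates on S and R' is one on S', and R + R' denotes their disjoint union on S + S' (with transitions T + T', sources and targets extended by zero on the other summand, and rates combined), then v^{R+R'} = i_* ∘ v^R ∘ i^* + i'_* ∘ v^{R'} ∘ i'^*, where i : S → S+S' and i' : S' → S+S' are the inclusions. -/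
/-!
The vector field is a sum over transitions, so it is additive under disjoint union of the
transition sets. A network whose complexes are extended by zero to a larger species set only
sees the concentrations of its own species (the extra factors are `c ^ 0 = 1`) and has zero
net stoichiometry on the others, so its vector field is the pushforward of the original one
along the inclusion, evaluated on the pulled-back concentrations.
-/

section pushR

variable {S S' : Type*} [Fintype S] [DecidableEq S'] {f : S → S'}

theorem pushR_apply_of_injective (hf : Function.Injective f) (c : S → ℝ) (σ : S) :
    pushR f c (f σ) = c σ := by
  classical
  simp [pushR, hf.eq_iff]

theorem pushR_apply_of_notMem_range {σ' : S'} (h : σ' ∉ Set.range f) (c : S → ℝ) :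
    pushR f c σ' = 0 := by
  simp_all [pushR]

end pushR

theorem massAction_sumElim {S T T' : Type*} [Fintype S] [Fintype T] [Fintype T']
    (s t : T → S → ℕ) (r : T → ℝ) (s' t' : T' → S → ℕ) (r' : T' → ℝ) :
    massAction (Sum.elim s s') (Sum.elim t t') (Sum.elim r r')
      = massAction s t r + massAction s' t' r' := by
  funext c σ
  simp [massAction, Fintype.sum_sum_type]

section extendByZero

variable {S S' T : Type*} [Fintype S] [Fintype S'] [Fintype T] [DecidableEq S] [DecidableEq S']
  (s t : T → S → ℕ) (r : T → ℝ)

theorem massAction_extend_inl :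
    massAction (fun τ => Sum.elim (s τ) (fun _ : S' => 0))
        (fun τ => Sum.elim (t τ) (fun _ => 0)) r
      = fun c => pushR Sum.inl (massAction s t r (pullR Sum.inl c)) := by
  funext c x
  cases x with
  | inl σ =>
    rw [pushR_apply_of_injective Sum.inl_injective]
    simp [massAction, pullR, Fintype.prod_sum_type]
  | inr σ' =>
    rw [pushR_apply_of_notMem_range fun ⟨_, h⟩ => Sum.inl_ne_inr h]
    simp [massAction]

theorem massAction_extend_inr :
    massAction (fun τ => Sum.elim (fun _ : S' => 0) (s τ))
        (fun τ => Sum.elim (fun _ => 0) (t τ)) r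
      = fun c => pushR Sum.inr (massAction s t r (pullR Sum.inr c)) := by
  funext c x
  cases x with
  | inl σ' =>
    rw [pushR_apply_of_notMem_range fun ⟨_, h⟩ => Sum.inr_ne_inl h]
    simp [massAction]
  | inr σ =>
    rw [pushR_apply_of_injective Sum.inr_injective]
    simp [massAction, pullR, Fintype.prod_sum_type]

end extendByZero

theorem massAction_disjoint_union_general {S S' T T' : Type*}
    [Fintype S] [Fintype S'] [Fintype T] [Fintype T'] [DecidableEq S] [DecidableEq S']
    (s t : T → S → ℕ) (r : T → ℝ) (s' t' : T' → S' → ℕ) (r' : T' → ℝ) :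
    massAction (S := S ⊕ S') (T := T ⊕ T')
      (Sum.elim (fun τ => Sum.elim (s τ) (fun _ => 0))
                (fun τ' => Sum.elim (fun _ => 0) (s' τ')))
      (Sum.elim (fun τ => Sum.elim (t τ) (fun _ => 0))
                (fun τ' => Sum.elim (fun _ => 0) (t' τ')))
      (Sum.elim r r')
    = fun c => pushR Sum.inl (massAction s t r (pullR Sum.inl c))
             + pushR Sum.inr (massAction s' t' r' (pullR Sum.inr c)) := by
  rw [massAction_sumElim, massAction_extend_inl, massAction_extend_inr]
  rfl

/-- The mass-action vector field of a disjoint union of reaction networks with rates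
decomposes: `v^{R+R'} = i_* ∘ v^R ∘ i^* + i'_* ∘ v^{R'} ∘ i'^*` for the inclusions
`i : S → S ⊕ S'` and `i' : S' → S ⊕ S'`. -/
theorem massAction_disjoint_union {S S' T T' : Type*}
    [Fintype S] [Fintype S'] [Fintype T] [Fintype T'] [DecidableEq S] [DecidableEq S']
    (s t : T → S → ℕ) (r : T → ℝ) (s' t' : T' → S' → ℕ) (r' : T' → ℝ)
    (hr : ∀ τ, 0 < r τ) (hr' : ∀ τ', 0 < r' τ') :
    massAction (S := S ⊕ S') (T := T ⊕ T')
      (Sum.elim (fun τ => Sum.elim (s τ) (fun _ => 0))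
                (fun τ' => Sum.elim (fun _ => 0) (s' τ')))
      (Sum.elim (fun τ => Sum.elim (t τ) (fun _ => 0))
                (fun τ' => Sum.elim (fun _ => 0) (t' τ')))
      (Sum.elim r r')
    = fun c => pushR Sum.inl (massAction s t r (pullR Sum.inl c))
             + pushR Sum.inr (massAction s' t' r' (pullR Sum.inr c)) :=
  massAction_disjoint_union_general s t r s' t' r'
end

section
/- Gluing of steady states: let (X →ⁱ S ←ᵒ Y, v) and (Y →^{i'} S' ←^{o'} Z, v') be open dynamical systems, with pushout S+_Y S' and canonical maps j, j'. Suppose c ∈ ℝ^S satisfies v(c) + i_*(I) − o_*(O) = 0 and c' ∈ ℝ^{S'} satisfies v'(c') + i'_*(O) − o'_*(O') = 0, and that o^*(c) = i'^*(c'). Then there is a unique b ∈ ℝ^{S+_Y S'} with j^*(b) = c and j'^*(b) = c', and it satisfies u(b) + (j∘i)_*(I) − (j'∘o')_*(O') = 0, where u = j_* ∘ v ∘ j^* + j'_* ∘ v' ∘ j'^*. -/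
section pushR

variable {A B C : Type*} [Fintype A] [DecidableEq B]

lemma pushR_apply (f : A → B) (c : A → ℝ) (b : B) :
    pushR f c b = ∑ a with f a = b, c a :=
  (Finset.sum_filter _ _).symm

lemma pushR_add (f : A → B) (c d : A → ℝ) :
    pushR f (c + d) = pushR f c + pushR f d := by
  funext b
  simp only [pushR_apply, Pi.add_apply, Finset.sum_add_distrib]

lemma pushR_sub (f : A → B) (c d : A → ℝ) :
    pushR f (c - d) = pushR f c - pushR f d := by
  funext b
  simp only [pushR_apply, Pi.sub_apply, Finset.sum_sub_distrib]

lemma pushR_zero (f : A → B) : pushR f (0 : A → ℝ) = 0 := by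
  funext b
  simp [pushR_apply]

lemma pushR_comp [Fintype B] [DecidableEq C] (f : A → B) (g : B → C) (c : A → ℝ) :
    pushR g (pushR f c) = pushR (g ∘ f) c := by
  funext p
  simp only [pushR_apply, Function.comp_apply]
  rw [← Finset.sum_fiberwise_of_maps_to (g := f) (t := {b | g b = p}) (by simp)]
  refine Finset.sum_congr rfl fun b hb => Finset.sum_congr ?_ fun _ _ => rfl
  ext a
  simp only [Finset.mem_filter, Finset.mem_univ, true_and] at hb ⊢
  exact ⟨fun ha => ⟨ha ▸ hb, ha⟩, And.right⟩

end pushR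

lemma pushR_balance_eq_zero {X Y S P : Type*} [Fintype X] [Fintype Y] [Fintype S]
    [DecidableEq S] [DecidableEq P] {i : X → S} {o : Y → S} {w : S → ℝ} {I : X → ℝ}
    {O : Y → ℝ} (h : w + pushR i I - pushR o O = 0) (j : S → P) :
    pushR j w + pushR (j ∘ i) I - pushR (j ∘ o) O = 0 := by
  rw [← pushR_comp, ← pushR_comp, ← pushR_add, ← pushR_sub, h, pushR_zero]

/-- Gluing of steady states: given open dynamical systems `(X →ⁱ S ←ᵒ Y, v)` and
`(Y →^{i'} S' ←^{o'} Z, v')`, a pushout `P = S +_Y S'` with maps `j, j'`, steady states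
`c` of the first (inflows `I`, outflows `O`) and `c'` of the second (inflows `O`,
outflows `O'`) agreeing on `Y`, there is a unique `b ∈ ℝ^P` with `j^*(b) = c` and
`j'^*(b) = c'`, and any such `b` satisfies
`u(b) + (j∘i)_*(I) − (j'∘o')_*(O') = 0` where `u = j_* ∘ v ∘ j^* + j'_* ∘ v' ∘ j'^*`. -/
theorem glue_steady_states {X Y Z S S' P : Type*}
    [Fintype X] [Fintype Y] [Fintype Z] [Fintype S] [Fintype S'] [Fintype P]
    [DecidableEq S] [DecidableEq S'] [DecidableEq P]
    (i : X → S) (o : Y → S) (i' : Y → S') (o' : Z → S')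
    (j : S → P) (j' : S' → P)
    (hcomm : j ∘ o = j' ∘ i')
    (huniv : ∀ {W : Type} (u : S → W) (u' : S' → W), u ∘ o = u' ∘ i' →
      ∃! w : P → W, w ∘ j = u ∧ w ∘ j' = u')
    (v : (S → ℝ) → (S → ℝ)) (v' : (S' → ℝ) → (S' → ℝ))
    (c : S → ℝ) (c' : S' → ℝ) (I : X → ℝ) (O : Y → ℝ) (O' : Z → ℝ)
    (hc : v c + pushR i I - pushR o O = 0)
    (hc' : v' c' + pushR i' O - pushR o' O' = 0)
    (hagree : c ∘ o = c' ∘ i') :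
    (∃! b : P → ℝ, b ∘ j = c ∧ b ∘ j' = c') ∧
    (∀ b : P → ℝ, b ∘ j = c → b ∘ j' = c' →
      (pushR j (v (b ∘ j)) + pushR j' (v' (b ∘ j')))
        + pushR (j ∘ i) I - pushR (j' ∘ o') O' = 0) := by
  refine ⟨huniv c c' hagree, fun b hb hb' => ?_⟩
  rw [hb, hb']
  have h := pushR_balance_eq_zero hc j
  -- The outflow `O` of the first system, pushed into `P`, is the inflow of the second.
  rw [hcomm] at h
  linear_combination h + pushR_balance_eq_zero hc' j'
end

section
/- Equivalence of decorated cospans is an equivalence relation, and composition of decorated cospans is well-defined on equivalence classes: if (X →ⁱ S ←ᵒ Y, d) is equivalent to (X →^{i₁} S₁ ←^{o₁} Y, d₁) via an isomorphism f : S → S₁ with F(f)(d) = d₁, f∘i = i₁, f∘o = o₁, and similarly for a second pair of decorated cospans from Y to Z, then the composites (formed via pushouts and the lax monoidal structure of F) are equivalent. -/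
open CategoryTheory Limits

/-- An `F`-decorated cospan from `X` to `Y`: a cospan `X → S ← Y` in `C` together with a
decoration `d ∈ F(S)`. -/
structure DecCospan {C : Type*} [Category C] (F : C ⥤ Type*) (X Y : C) where
  apex : C
  i : X ⟶ apex
  o : Y ⟶ apex
  dec : F.obj apex

/-- Two decorated cospans are equivalent if there is an isomorphism of apexes commuting
with the legs and carrying one decoration to the other. -/
def DecEquiv {C : Type*} [Category C] {F : C ⥤ Type*} {X Y : C}
    (a b : DecCospan F X Y) : Prop :=
  ∃ f : a.apex ≅ b.apex, a.i ≫ f.hom = b.i ∧ a.o ≫ f.hom = b.o ∧ F.map f.hom a.dec = b.dec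

/-- The composite of decorated cospans, glued along a pushout and decorated using the lax
monoidal structure map `φ` followed by `F([j,j'])`. -/
noncomputable def DecComp {C : Type*} [Category C] [HasFiniteColimits C] {F : C ⥤ Type*}
    (φ : ∀ A B : C, F.obj A × F.obj B → F.obj (A ⨿ B))
    {X Y Z : C} (a : DecCospan F X Y) (b : DecCospan F Y Z) : DecCospan F X Z where
  apex := pushout a.o b.i
  i := a.i ≫ pushout.inl a.o b.i
  o := b.o ≫ pushout.inr a.o b.i
  dec := F.map (coprod.desc (pushout.inl a.o b.i) (pushout.inr a.o b.i))
    (φ a.apex b.apex (a.dec, b.dec))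

/-
Equivalences of decorated cospans compose and invert as isomorphisms do. For composition,
isomorphisms `f : S ≅ S₁` and `g : T ≅ T₁` that fix the legs from `Y` induce an isomorphism
`S +_Y T ≅ S₁ +_Y T₁` of pushouts, which fixes the outer legs because `f` and `g` do. It carries
the decoration along because the canonical map `S + T ⟶ S +_Y T` is natural in `(f, g)`, and so
is `φ`.
-/

namespace DecEquiv

variable {C : Type*} [Category C] {F : C ⥤ Type*} {X Y : C}

theorem refl (a : DecCospan F X Y) : DecEquiv a a :=
  ⟨Iso.refl _, by simp, by simp, by simp⟩

theorem symm {a b : DecCospan F X Y} : DecEquiv a b → DecEquiv b a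
  | ⟨f, hi, ho, hd⟩ =>
    ⟨f.symm, by simp [← hi], by simp [← ho], by simp [← hd, ← Functor.map_comp_apply]⟩

theorem trans {a b c : DecCospan F X Y} : DecEquiv a b → DecEquiv b c → DecEquiv a c
  | ⟨f, hfi, hfo, hfd⟩, ⟨g, hgi, hgo, hgd⟩ =>
    ⟨f ≪≫ g, by simp [reassoc_of% hfi, hgi], by simp [reassoc_of% hfo, hgo], by simp [hfd, hgd]⟩

theorem equivalence : Equivalence (DecEquiv (F := F) (X := X) (Y := Y)) :=
  ⟨refl, symm, trans⟩

end DecEquiv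

theorem coprod_desc_pushout_comp_pushout_map {C : Type*} [Category C]
    {Y Y' A B A' B' : C} (o : Y ⟶ A) (i : Y ⟶ B) (o' : Y' ⟶ A') (i' : Y' ⟶ B')
    [HasPushout o i] [HasPushout o' i'] [HasBinaryCoproduct A B] [HasBinaryCoproduct A' B']
    (f : A ⟶ A') (g : B ⟶ B') (h : Y ⟶ Y') (hf : o ≫ f = h ≫ o') (hg : i ≫ g = h ≫ i') :
    coprod.desc (pushout.inl o i) (pushout.inr o i) ≫ pushout.map o i o' i' f g h hf hg =
      coprod.map f g ≫ coprod.desc (pushout.inl o' i') (pushout.inr o' i') := by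
  ext <;> simp [pushout.inl_desc, pushout.inr_desc]

theorem DecEquiv.decComp {C : Type*} [Category C] [HasFiniteColimits C] {F : C ⥤ Type*}
    {φ : ∀ A B : C, F.obj A × F.obj B → F.obj (A ⨿ B)}
    (hφ : ∀ {A B A' B' : C} (f : A ⟶ B) (f' : A' ⟶ B') (d : F.obj A) (d' : F.obj A'),
      F.map (coprod.map f f') (φ A A' (d, d')) = φ B B' (F.map f d, F.map f' d'))
    {X Y Z : C} {a a₁ : DecCospan F X Y} {b b₁ : DecCospan F Y Z}
    (ha : DecEquiv a a₁) (hb : DecEquiv b b₁) : DecEquiv (DecComp φ a b) (DecComp φ a₁ b₁) := by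
  obtain ⟨f, hfi, hfo, hfd⟩ := ha
  obtain ⟨g, hgi, hgo, hgd⟩ := hb
  let e := pushout.map a.o b.i a₁.o b₁.i f.hom g.hom (𝟙 Y) (by simp [hfo]) (by simp [hgi])
  refine ⟨(asIso e : pushout a.o b.i ≅ pushout a₁.o b₁.i),
    by simp [DecComp, e, pushout.inl_desc, ← hfi],
    by simp [DecComp, e, pushout.inr_desc, ← hgo], ?_⟩
  calc F.map e (F.map (coprod.desc _ _) (φ a.apex b.apex (a.dec, b.dec)))
      = F.map (coprod.desc _ _) (F.map (coprod.map f.hom g.hom) (φ _ _ (a.dec, b.dec))) := by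
        rw [← Functor.map_comp_apply, coprod_desc_pushout_comp_pushout_map,
          Functor.map_comp_apply]
    _ = F.map (coprod.desc _ _) (φ a₁.apex b₁.apex (a₁.dec, b₁.dec)) := by rw [hφ, hfd, hgd]

/-- Equivalence of decorated cospans is an equivalence relation, and composition of
decorated cospans is well-defined on equivalence classes: equivalent composable pairs have
equivalent composites.  Here `φ` is the lax monoidal structure map of `F`, assumed natural. -/
theorem decEquiv_equivalence_and_comp_well_defined
    {C : Type*} [Category C] [HasFiniteColimits C] {F : C ⥤ Type*}
    (φ : ∀ A B : C, F.obj A × F.obj B → F.obj (A ⨿ B))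
    (hφ : ∀ {A B A' B' : C} (f : A ⟶ B) (f' : A' ⟶ B') (d : F.obj A) (d' : F.obj A'),
      F.map (coprod.map f f') (φ A A' (d, d')) = φ B B' (F.map f d, F.map f' d'))
    (X Y Z : C) :
    Equivalence (DecEquiv (F := F) (X := X) (Y := Y)) ∧
    (∀ (a a₁ : DecCospan F X Y) (b b₁ : DecCospan F Y Z),
      DecEquiv a a₁ → DecEquiv b b₁ → DecEquiv (DecComp φ a b) (DecComp φ a₁ b₁)) :=
  ⟨DecEquiv.equivalence, fun _ _ _ _ ha hb => ha.decComp hφ hb⟩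
end
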